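/- arXiv:1809.08830 — 2 statements merged into one kernel-verified Lean document; each statement's English description precedes it below -/
import Mathlib

section
/- Let γ ≥ 0, let D ∈ ℝ^{d×d} be symmetric positive semidefinite with D ≠ 0, and let Σ ∈ ℝ^{d×d} be symmetric positive definite. If γ I_d − D is not positive definite, then the function S ↦ ⟨D, S⟩ − γ·Tr(S − 2(Σ^{1/2} S Σ^{1/2})^{1/2}) is unbounded above on the set of symmetric positive semidefinite matrices S ∈ ℝ^{d×d}. -/
/-!
On rank-one matrices `S = v vᵀ` the objective is explicit: `Σ^{1/2} S Σ^{1/2} = w wᵀ` with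
`w = Σ^{1/2} v`, whose square root is `w wᵀ / ‖w‖`, of trace `‖w‖ = √(vᵀ Σ v)`. Hence along the ray
`v = s u` the objective is `a s² + b s` with `a = uᵀDu − γ‖u‖²` and `b = 2γ√(uᵀΣu)`. If `γ > 0`,
non-definiteness of `γI − D` yields `u ≠ 0` with `a ≥ 0`, and `b > 0`; if `γ = 0`, `D ≠ 0` yields
`u` with `a > 0`. Either way `a s² + b s` is unbounded on `s ≥ 0`.
-/

open Matrix

-- `msqrt M` is the unique symmetric PSD square root of a symmetric PSD matrix `M` (else `0`).
open Classical in
noncomputable def msqrt {ι : Type*} [Fintype ι] [DecidableEq ι] (M : Matrix ι ι ℝ) : Matrix ι ι ℝ :=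
  if h : M.PosSemidef then
    (h.1.eigenvectorUnitary : Matrix ι ι ℝ) * diagonal (Real.sqrt ∘ h.1.eigenvalues) *
      (star h.1.eigenvectorUnitary : Matrix ι ι ℝ) else 0

noncomputable def obj {d : ℕ} (γ : ℝ) (D Sg S : Matrix (Fin d) (Fin d) ℝ) : ℝ :=
  (Dᵀ * S).trace - γ * (S - (2:ℝ) • msqrt (msqrt Sg * S * msqrt Sg)).trace

namespace Matrix

variable {n : Type*} [Fintype n]

lemma posSemidef_vecMulVec_self (w : n → ℝ) : (vecMulVec w w).PosSemidef := by
  simpa using posSemidef_vecMulVec_self_star w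

section msqrt

variable [DecidableEq n]

open scoped MatrixOrder

lemma PosSemidef.msqrt_eq_cfcSqrt {M : Matrix n n ℝ} (h : M.PosSemidef) :
    msqrt M = CFC.sqrt M := by
  rw [CFC.sqrt_eq_cfc, cfc_nnreal_eq_real _ M h.nonneg, h.1.cfc_eq, msqrt, dif_pos h]
  simp only [IsHermitian.cfc, Unitary.conjStarAlgAut_apply]
  congr 3
  funext x
  simp only [Function.comp_apply, RCLike.ofReal_real_eq_id, id]
  rw [Real.coe_sqrt, Real.coe_toNNReal _ (h.eigenvalues_nonneg x)]

lemma PosSemidef.posSemidef_msqrt {M : Matrix n n ℝ} (h : M.PosSemidef) :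
    (msqrt M).PosSemidef := by
  rw [h.msqrt_eq_cfcSqrt, ← nonneg_iff_posSemidef]
  exact CFC.sqrt_nonneg M

lemma PosSemidef.msqrt_mul_msqrt {M : Matrix n n ℝ} (h : M.PosSemidef) :
    msqrt M * msqrt M = M := by
  rw [h.msqrt_eq_cfcSqrt]
  exact CFC.sqrt_mul_sqrt_self M h.nonneg

-- For `w = 0` both sides vanish, thanks to `(√0)⁻¹ = 0`.
lemma msqrt_vecMulVec_self (w : n → ℝ) :
    msqrt (vecMulVec w w) = (√(w ⬝ᵥ w))⁻¹ • vecMulVec w w := by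
  have hw := posSemidef_vecMulVec_self w
  rw [hw.msqrt_eq_cfcSqrt, CFC.sqrt_eq_iff _ _ hw.nonneg
    (nonneg_iff_posSemidef.mpr (hw.smul (by positivity)))]
  rcases eq_or_ne w 0 with rfl | hw0
  · simp
  have hww : 0 ≤ w ⬝ᵥ w := by simpa using dotProduct_star_self_nonneg w
  rw [smul_mul_smul, vecMulVec_mul_vecMulVec, vecMulVec_smul, smul_smul, ← mul_inv, ← sq,
    Real.sq_sqrt hww, inv_mul_cancel₀ (dotProduct_self_eq_zero.not.mpr hw0),
    one_smul]

end msqrt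

variable [DecidableEq n]

lemma PosSemidef.exists_dotProduct_mulVec_pos {D : Matrix n n ℝ} (hD : D.PosSemidef)
    (hD0 : D ≠ 0) :
    ∃ u, 0 < u ⬝ᵥ D *ᵥ u := by
  have htr : ∑ _i : n, (0 : ℝ) < ∑ i, D i i := by
    simpa [trace] using lt_of_le_of_ne hD.trace_nonneg (Ne.symm (hD.trace_eq_zero_iff.not.mpr hD0))
  obtain ⟨i, -, hi⟩ := Finset.exists_lt_of_sum_lt htr
  exact ⟨Pi.single i 1, by simpa using hi⟩

lemma exists_smul_dotProduct_self_le_of_not_posDef {γ : ℝ} {D : Matrix n n ℝ} (hD : D.IsHermitian)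
    (h : ¬ (γ • (1 : Matrix n n ℝ) - D).PosDef) : ∃ u ≠ 0, γ * (u ⬝ᵥ u) ≤ u ⬝ᵥ D *ᵥ u := by
  have hherm : (γ • (1 : Matrix n n ℝ) - D).IsHermitian :=
    IsHermitian.sub (by simp [IsHermitian]) hD
  simp only [posDef_iff_dotProduct_mulVec, hherm, true_and, not_forall, not_lt] at h
  obtain ⟨u, hu0, hu⟩ := h
  refine ⟨u, hu0, ?_⟩
  simpa only [star_trivial, sub_mulVec, smul_mulVec, one_mulVec, dotProduct_sub, dotProduct_smul,
    smul_eq_mul, sub_nonpos] using hu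

end Matrix

lemma obj_vecMulVec_self {d : ℕ} (γ : ℝ) (D : Matrix (Fin d) (Fin d) ℝ)
    {Sg : Matrix (Fin d) (Fin d) ℝ} (hSg : Sg.PosSemidef) (v : Fin d → ℝ) :
    obj γ D Sg (vecMulVec v v) = v ⬝ᵥ D *ᵥ v - γ * (v ⬝ᵥ v) + 2 * γ * √(v ⬝ᵥ Sg *ᵥ v) := by
  set R := msqrt Sg
  have hR : Rᵀ = R := by
    rw [← conjTranspose_eq_transpose_of_trivial]
    exact hSg.posSemidef_msqrt.isHermitian.eq
  have hconj : R * vecMulVec v v * R = vecMulVec (R *ᵥ v) (R *ᵥ v) := by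
    rw [mul_vecMulVec, vecMulVec_mul, ← mulVec_transpose, hR]
  have hnorm : (R *ᵥ v) ⬝ᵥ (R *ᵥ v) = v ⬝ᵥ Sg *ᵥ v := by
    rw [← hSg.msqrt_mul_msqrt, ← mulVec_mulVec, dotProduct_mulVec v R, ← mulVec_transpose, hR]
  have hD : (Dᵀ * vecMulVec v v).trace = v ⬝ᵥ D *ᵥ v := by
    rw [mul_vecMulVec, trace_vecMulVec, mulVec_transpose, ← dotProduct_mulVec]
  rw [obj, hconj, msqrt_vecMulVec_self, trace_sub, trace_smul, trace_smul, trace_vecMulVec,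
    trace_vecMulVec, hnorm, hD, smul_eq_mul, smul_eq_mul, inv_mul_eq_div, Real.div_sqrt]
  ring

lemma not_bddAbove_image_Ici_quadratic {a b : ℝ} (ha : 0 ≤ a) (hab : 0 < a + b) :
    ¬ BddAbove ((fun s : ℝ => a * s ^ 2 + b * s) '' Set.Ici 0) := by
  rintro ⟨m, hm⟩
  set s := max 1 (m / (a + b)) + 1
  have hs : 1 ≤ s := by linarith [le_max_left 1 (m / (a + b))]
  have hms : m < (a + b) * s := by
    rw [mul_comm, ← div_lt_iff₀ hab]
    linarith [le_max_right 1 (m / (a + b))]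
  have hsm : a * s ^ 2 + b * s ≤ m := hm ⟨s, by simp only [Set.mem_Ici]; linarith, rfl⟩
  nlinarith [mul_le_mul_of_nonneg_left (show s ≤ s ^ 2 by nlinarith) ha]

lemma not_bddAbove_obj {d : ℕ} {γ : ℝ} {D Sg : Matrix (Fin d) (Fin d) ℝ}
    (hSg : Sg.PosSemidef) {u : Fin d → ℝ} (hle : γ * (u ⬝ᵥ u) ≤ u ⬝ᵥ D *ᵥ u)
    (hpos : 0 < u ⬝ᵥ D *ᵥ u - γ * (u ⬝ᵥ u) + 2 * γ * √(u ⬝ᵥ Sg *ᵥ u)) :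
    ¬ BddAbove { r : ℝ | ∃ S : Matrix (Fin d) (Fin d) ℝ, S.PosSemidef ∧ r = obj γ D Sg S } := by
  refine fun h => not_bddAbove_image_Ici_quadratic (sub_nonneg.mpr hle) hpos (h.mono ?_)
  rintro _ ⟨s, hs, rfl⟩
  refine ⟨vecMulVec (s • u) (s • u), posSemidef_vecMulVec_self _, ?_⟩
  simp only [obj_vecMulVec_self γ D hSg, mulVec_smul, dotProduct_smul, smul_dotProduct,
    smul_eq_mul, ← mul_assoc]
  rw [Real.sqrt_mul (mul_self_nonneg s), Real.sqrt_mul_self hs]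
  ring

/-- If `γ ≥ 0` but `γ I − D` is not positive definite, then
`S ↦ ⟨D,S⟩ − γ·Tr(S − 2(Σ^{1/2} S Σ^{1/2})^{1/2})` is unbounded above over symmetric PSD `S`. -/
theorem stmt2 {d : ℕ} (γ : ℝ) (hγ0 : 0 ≤ γ) (D Sg : Matrix (Fin d) (Fin d) ℝ)
    (hD : D.PosSemidef) (hD0 : D ≠ 0) (hSg : Sg.PosDef)
    (hγ : ¬ (γ • (1 : Matrix (Fin d) (Fin d) ℝ) - D).PosDef) :
    ¬ BddAbove { r : ℝ | ∃ S : Matrix (Fin d) (Fin d) ℝ, S.PosSemidef ∧ r = obj γ D Sg S } := by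
  obtain ⟨u, hle, hpos⟩ : ∃ u : Fin d → ℝ, γ * (u ⬝ᵥ u) ≤ u ⬝ᵥ D *ᵥ u ∧
      0 < u ⬝ᵥ D *ᵥ u - γ * (u ⬝ᵥ u) + 2 * γ * √(u ⬝ᵥ Sg *ᵥ u) := by
    rcases hγ0.eq_or_lt with rfl | hγpos
    · obtain ⟨u, hu⟩ := hD.exists_dotProduct_mulVec_pos hD0
      exact ⟨u, by simpa using hu.le, by simpa using hu⟩
    · obtain ⟨u, hu0, hu⟩ := exists_smul_dotProduct_self_le_of_not_posDef hD.isHermitian hγ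
      have hSgu : 0 < √(u ⬝ᵥ Sg *ᵥ u) :=
        Real.sqrt_pos.mpr (by simpa using hSg.dotProduct_mulVec_pos hu0)
      exact ⟨u, hu, by nlinarith⟩
  exact not_bddAbove_obj hSg.posSemidef hle hpos
end

section
/- Let Σ ∈ ℝ^{d×d} be symmetric positive definite and D ∈ ℝ^{d×d} symmetric positive semidefinite, and let γ ∈ ℝ be such that γ I_d − D is positive definite. Then L(γ) = γ² (γ I_d − D)^{-1} Σ (γ I_d − D)^{-1} satisfies L(γ) ⪰ λ_min(Σ)·I_d, where λ_min(Σ) denotes the smallest eigenvalue of Σ and A ⪰ B means that A − B is symmetric positive semidefinite. -/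
open Matrix

/-- `Bdist Sg S = Tr(S + Σ − 2(Σ^{1/2} S Σ^{1/2})^{1/2})`. -/
noncomputable def Bdist {ι : Type*} [Fintype ι] [DecidableEq ι] (Sg S : Matrix ι ι ℝ) : ℝ :=
  (S + Sg - (2:ℝ) • msqrt (msqrt Sg * S * msqrt Sg)).trace

/-!
With `M = γ I − D` we have `0 ≺ M ⪯ γ I`, and since `M` commutes with `γ I` this squares to
`M² ⪯ γ² I`. Hence `λ_min(Σ) M² ⪯ λ_min(Σ) γ² I ⪯ γ² Σ`, and conjugating by the symmetric
matrix `M⁻¹` gives `λ_min(Σ) I ⪯ γ² M⁻¹ Σ M⁻¹`.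
-/

open scoped MatrixOrder ComplexOrder

section StarOrderedAlgebra

variable {A : Type*} [Ring A] [PartialOrder A] [StarRing A] [StarOrderedRing A]
  [TopologicalSpace A] [Algebra ℝ A] [ContinuousFunctionalCalculus ℝ A IsSelfAdjoint]
  [NonnegSpectrumClass ℝ A]

theorem mul_self_le_algebraMap_sq {a : A} {r : ℝ} (ha : 0 ≤ a) (har : a ≤ algebraMap ℝ A r) :
    a * a ≤ algebraMap ℝ A (r ^ 2) := by
  set b := algebraMap ℝ A r - a
  have hb : 0 ≤ b := sub_nonneg.2 har
  have hab : Commute a b := (Algebra.commute_algebraMap_right r a).sub_right (Commute.refl a)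
  have hsplit : algebraMap ℝ A (r ^ 2) - a * a = b * b + 2 • (a * b) := by
    simp only [b, Algebra.algebraMap_eq_smul_one, sub_mul, mul_sub, smul_mul_assoc,
      mul_smul_comm, one_mul, mul_one, pow_two, mul_smul]
    module
  rw [← sub_nonneg, hsplit]
  exact add_nonneg ((Commute.refl b).mul_nonneg hb hb) (nsmul_nonneg (hab.mul_nonneg ha hb) 2)

end StarOrderedAlgebra

namespace Matrix

variable {n 𝕜 : Type*} [Fintype n] [DecidableEq n] [RCLike 𝕜]

theorem IsHermitian.iInf_eigenvalues_smul_one_le {S : Matrix n n 𝕜} (hS : S.IsHermitian) :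
    (⨅ i, hS.eigenvalues i) • (1 : Matrix n n 𝕜) ≤ S := by
  rw [← Algebra.algebraMap_eq_smul_one, algebraMap_le_iff_le_spectrum hS.isSelfAdjoint,
    hS.spectrum_real_eq_range_eigenvalues]
  rintro _ ⟨i, rfl⟩
  exact ciInf_le (Finite.bddBelow_range _) i

theorem smul_one_le_sq_smul_inv_mul_mul_inv {S D : Matrix n n 𝕜} {c γ : ℝ} (hc : 0 ≤ c)
    (hcS : c • (1 : Matrix n n 𝕜) ≤ S) (hD : 0 ≤ D) (hγ : (γ • (1 : Matrix n n 𝕜) - D).PosDef) :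
    c • (1 : Matrix n n 𝕜) ≤
      γ ^ 2 • ((γ • (1 : Matrix n n 𝕜) - D)⁻¹ * S * (γ • (1 : Matrix n n 𝕜) - D)⁻¹) := by
  set M := γ • (1 : Matrix n n 𝕜) - D
  have hMM : M * M ≤ γ ^ 2 • (1 : Matrix n n 𝕜) := by
    simpa only [Algebra.algebraMap_eq_smul_one] using
      mul_self_le_algebraMap_sq hγ.posSemidef.nonneg
        (by simpa only [Algebra.algebraMap_eq_smul_one] using sub_le_self _ hD)
  have hMMS : c • (M * M) ≤ γ ^ 2 • S :=
    calc c • (M * M) ≤ c • γ ^ 2 • (1 : Matrix n n 𝕜) := smul_le_smul_of_nonneg_left hMM hc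
      _ = γ ^ 2 • c • (1 : Matrix n n 𝕜) := smul_comm _ _ _
      _ ≤ γ ^ 2 • S := smul_le_smul_of_nonneg_left hcS (sq_nonneg γ)
  have hdet : IsUnit M.det := hγ.isUnit.map detMonoidHom
  have hconj := star_left_conjugate_le_conjugate hMMS M⁻¹
  rwa [(isHermitian_iff_isSelfAdjoint.1 hγ.isHermitian.inv).star_eq, mul_smul_comm,
    smul_mul_assoc, ← mul_assoc, nonsing_inv_mul _ hdet, one_mul, mul_nonsing_inv _ hdet,
    mul_smul_comm, smul_mul_assoc] at hconj

end Matrix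

theorem stmt5_general {d : ℕ} (Sg D : Matrix (Fin d) (Fin d) ℝ)
    (hSg : Sg.PosDef) (hD : D.PosSemidef)
    (γ : ℝ) (hγ : (γ • (1 : Matrix (Fin d) (Fin d) ℝ) - D).PosDef) :
    (γ ^ 2 • ((γ • (1 : Matrix (Fin d) (Fin d) ℝ) - D)⁻¹ * Sg *
        (γ • (1 : Matrix (Fin d) (Fin d) ℝ) - D)⁻¹) -
      (⨅ i, hSg.1.eigenvalues i) • (1 : Matrix (Fin d) (Fin d) ℝ)).PosSemidef :=
  smul_one_le_sq_smul_inv_mul_mul_inv (Real.iInf_nonneg fun i => (hSg.eigenvalues_pos i).le)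
    hSg.isHermitian.iInf_eigenvalues_smul_one_le hD.nonneg hγ

/-- For `γ I − D ≻ 0`, `L(γ) = γ² (γI − D)⁻¹ Σ (γI − D)⁻¹` satisfies `L(γ) ⪰ λ_min(Σ) I`. -/
theorem stmt5 {d : ℕ} [NeZero d] (Sg D : Matrix (Fin d) (Fin d) ℝ)
    (hSg : Sg.PosDef) (hD : D.PosSemidef)
    (γ : ℝ) (hγ : (γ • (1 : Matrix (Fin d) (Fin d) ℝ) - D).PosDef) :
    (γ ^ 2 • ((γ • (1 : Matrix (Fin d) (Fin d) ℝ) - D)⁻¹ * Sg *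
        (γ • (1 : Matrix (Fin d) (Fin d) ℝ) - D)⁻¹) -
      (⨅ i, hSg.1.eigenvalues i) • (1 : Matrix (Fin d) (Fin d) ℝ)).PosSemidef :=
  stmt5_general Sg D hSg hD γ hγ
end
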